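/- arXiv:2008.07144 — 2 statements merged into one kernel-verified Lean document; each statement's English description precedes it below -/
import Mathlib

section
/- Structure of the cluster ordering: let [α_1,…,α_r] and [β_1,…,β_l] be clusters with [α_1,…,α_r] ≺ [β_1,…,β_l]. Then r ≤ l, and there exist an increasing sequence of integers 0 = h_0 < h_1 < ⋯ < h_r = l and integers κ_{i,j} ∈ ℤ such that, for every i = 1,…,r, α_i = β_{h_{i−1}+1}·q^{κ_{i,h_{i−1}+1}} + ⋯ + β_{h_i}·q^{κ_{i,h_i}} (as functions ℕ* → ℚ). -/
/-! Fix a stage of the good sequence at which the exponents `d_1 > ⋯ > d_r` are pairwise further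
apart than `K + (K + 1)(l + 1)`, where `q^K` bounds every value of every `α_i` and `β_j`, and let
`e_1 > ⋯ > e_l` be the exponents of the resulting element of `[β_1, …, β_l]`. Call `c` a cut if no
exponent lies in `[c - K, c)`: then `N % q^c`, for `N = ∑ q^{d_i} α_i(x) = ∑ q^{e_j} β_j(x)`, is
the sum of the terms below `c`, in either expansion. As there are only `l` exponents `e_j`, a
common cut exists between any two consecutive `d_i`, and comparing the two expansions between
consecutive cuts gives `q^{d_i} α_i = ∑_{j in block i} q^{e_j} β_j`. The blocks are contiguous as
`e` decreases, and nonempty as `α_i ≠ 0`. -/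

/- Clusters: `[α_1, …, α_r]` is the set of all `α_1 q^{d_1} + ⋯ + α_r q^{d_r}` with
`d_1 > ⋯ > d_r ≥ 0`, where the `α_i : ℕ* → ℕ` are finitely supported and nonzero
(we model functions `ℕ* → ℕ` with finite support as `ℕ →₀ ℕ`). -/

noncomputable section

namespace PaperClusters

/-- The cluster `[α_1, …, α_r]` (here `α : Fin r → (ℕ →₀ ℕ)`(decreasingly indexed)). -/
def clusterSet (q : ℕ) {r : ℕ} (α : Fin r → (ℕ →₀ ℕ)) : Set (ℕ →₀ ℕ) :=
  {g | ∃ d : Fin r → ℕ, StrictAnti d ∧ g = ∑ i, q ^ (d i) • α i}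

/-- A good sequence `(d_{1,m}, …, d_{r,m})_{m ≥ 0}`: each term is strictly decreasing,
`d_{r,m} → ∞`, and `d_{i,m} − d_{i+1,m} → ∞` for every `i < r`. -/
def GoodSeq (r : ℕ) (D : ℕ → Fin r → ℕ) : Prop :=
  (∀ m, StrictAnti (D m)) ∧
  (∀ hr : 0 < r, Filter.Tendsto (fun m => D m ⟨r - 1, by omega⟩) Filter.atTop Filter.atTop) ∧
  (∀ i : ℕ, ∀ h : i + 1 < r,
    Filter.Tendsto (fun m => D m ⟨i, by omega⟩ - D m ⟨i + 1, h⟩) Filter.atTop Filter.atTop)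

/-- The cluster ordering: `[α_1, …, α_r] ≺ [β_1, …, β_l]` iff there is a good sequence
`(d_{1,m}, …, d_{r,m})` with `α_1 q^{d_{1,m}} + ⋯ + α_r q^{d_{r,m}} ∈ [β_1, …, β_l]`
for every `m`. -/
def Prec (q : ℕ) {r l : ℕ} (α : Fin r → (ℕ →₀ ℕ)) (β : Fin l → (ℕ →₀ ℕ)) : Prop :=
  ∃ D : ℕ → Fin r → ℕ, GoodSeq r D ∧
    ∀ m, (∑ i, q ^ (D m i) • α i) ∈ clusterSet q β

open Finset Filter

section Digits

variable {ι : Type*}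

def IsCut (K : ℕ) (e : ι → ℕ) (c : ℕ) : Prop :=
  ∀ j, e j < c → e j + K < c

variable {q K : ℕ}

theorem sum_pow_mul_lt_pow (hq : 2 ≤ q) {c : ℕ} {s : Finset ι} {e b : ι → ℕ} (he : Set.InjOn e s)
    (hb : ∀ j ∈ s, b j ≤ q ^ K) (hc : ∀ j ∈ s, e j + K < c) :
    ∑ j ∈ s, q ^ e j * b j < q ^ c := by
  rcases s.eq_empty_or_nonempty with rfl | ⟨j₀, hj₀⟩
  · simpa using pow_pos (by omega : 0 < q) c
  have hKc : K ≤ c := by have := hc j₀ hj₀; omega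
  calc ∑ j ∈ s, q ^ e j * b j ≤ ∑ j ∈ s, q ^ e j * q ^ K :=
        sum_le_sum fun j hj => Nat.mul_le_mul_left _ (hb j hj)
    _ = (∑ t ∈ s.image e, q ^ t) * q ^ K := by rw [sum_image he, sum_mul]
    _ < q ^ (c - K) * q ^ K := by
        refine Nat.mul_lt_mul_of_pos_right (Nat.geomSum_lt hq ?_) (by positivity)
        simp only [mem_image]
        rintro _ ⟨j, hj, rfl⟩
        have := hc j hj
        omega
    _ = q ^ c := by rw [← pow_add, Nat.sub_add_cancel hKc]

theorem sum_filter_lt_add_sum_filter_Ico {M : Type*} [AddCommMonoid M] (s : Finset ι) (e : ι → ℕ)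
    (f : ι → M) {c c' : ℕ} (h : c ≤ c') :
    ∑ j ∈ s with e j < c, f j + ∑ j ∈ s with c ≤ e j ∧ e j < c', f j =
      ∑ j ∈ s with e j < c', f j := by
  rw [← sum_filter_add_sum_filter_not (s.filter fun j => e j < c') (fun j => e j < c),
    filter_filter, filter_filter]
  congr 2 <;> apply filter_congr <;> intro j _ <;> omega

variable [Fintype ι]

theorem sum_pow_mul_mod_pow (hq : 2 ≤ q) {c : ℕ} {e b : ι → ℕ} (he : Function.Injective e)
    (hb : ∀ j, b j ≤ q ^ K) (hc : IsCut K e c) :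
    (∑ j, q ^ e j * b j) % q ^ c = ∑ j with e j < c, q ^ e j * b j := by
  rw [← sum_filter_add_sum_filter_not univ (fun j => e j < c)]
  obtain ⟨n, hn⟩ : q ^ c ∣ ∑ j with ¬ e j < c, q ^ e j * b j :=
    dvd_sum fun j hj => dvd_mul_of_dvd_left (pow_dvd_pow q (not_lt.mp (mem_filter.mp hj).2)) _
  rw [hn, Nat.add_mul_mod_self_left, Nat.mod_eq_of_lt]
  exact sum_pow_mul_lt_pow hq he.injOn (fun j _ => hb j) fun j hj => hc j (mem_filter.mp hj).2

theorem sum_filter_Ico_eq_of_isCut {κ : Type*} [Fintype κ] (hq : 2 ≤ q) {e b : ι → ℕ}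
    {e' b' : κ → ℕ} (he : Function.Injective e) (he' : Function.Injective e')
    (hb : ∀ j, b j ≤ q ^ K) (hb' : ∀ j, b' j ≤ q ^ K)
    (hsum : ∑ j, q ^ e j * b j = ∑ j, q ^ e' j * b' j) {c c' : ℕ} (hcc' : c ≤ c')
    (hce : IsCut K e c) (hce' : IsCut K e' c) (hc'e : IsCut K e c') (hc'e' : IsCut K e' c') :
    ∑ j with c ≤ e j ∧ e j < c', q ^ e j * b j =
      ∑ j with c ≤ e' j ∧ e' j < c', q ^ e' j * b' j := by
  have low : ∀ {c}, IsCut K e c → IsCut K e' c →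
      ∑ j with e j < c, q ^ e j * b j = ∑ j with e' j < c, q ^ e' j * b' j := fun h h' => by
    rw [← sum_pow_mul_mod_pow hq he hb h, ← sum_pow_mul_mod_pow hq he' hb' h', hsum]
  have := sum_filter_lt_add_sum_filter_Ico univ e (fun j => q ^ e j * b j) hcc'
  have := sum_filter_lt_add_sum_filter_Ico univ e' (fun j => q ^ e' j * b' j) hcc'
  have := low hce hce'
  have := low hc'e hc'e'
  omega

theorem exists_isCut_between (e : ι → ℕ) (K a : ℕ) :
    ∃ c, a < c ∧ c ≤ a + (K + 1) * (Fintype.card ι + 1) ∧ IsCut K e c := by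
  classical
  -- `e j` can only meet the window `[a + (K + 1) s + 1, a + (K + 1) (s + 1))` for
  -- `s = (e j - (a + 1)) / (K + 1)`, so one of the first `card ι + 1` windows is free.
  obtain ⟨s, hs, hfree⟩ := exists_mem_notMem_of_card_lt_card
    (s := univ.image fun j => (e j - (a + 1)) / (K + 1)) (t := range (Fintype.card ι + 1))
    (by rw [card_range]; exact card_image_le.trans_lt (by rw [card_univ]; omega))
  have hs : s ≤ Fintype.card ι := Nat.lt_succ_iff.mp (mem_range.mp hs)
  refine ⟨a + (K + 1) * (s + 1), by nlinarith, by gcongr, fun j hj => ?_⟩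
  by_contra hK
  have : K + 1 ≤ (K + 1) * (s + 1) := Nat.le_mul_of_pos_right _ s.succ_pos
  obtain ⟨n, hn⟩ : ∃ n, e j = a + 1 + n := ⟨e j - (a + 1), by omega⟩
  refine hfree (mem_image.mpr ⟨j, mem_univ _, Nat.div_eq_of_lt_le ?_ ?_⟩) <;>
    rw [hn, Nat.add_sub_cancel_left] <;> nlinarith

end Digits

section Blocks

variable {q K r l : ℕ}

theorem exists_cuts (hr : 0 < r) {d : Fin r → ℕ} {e : Fin l → ℕ} (hd : StrictAnti d)
    (hsep : ∀ i i', i < i' → d i' + (K + (K + 1) * (l + 1)) ≤ d i) :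
    ∃ c : ℕ → ℕ, c r = 0 ∧ (∀ j, e j < c 0) ∧
      ∀ k, IsCut K d (c k) ∧ IsCut K e (c k) ∧ ∀ i : Fin r, (c k ≤ d i ↔ (i : ℕ) < k) := by
  choose mid hmid_gt hmid_le hmid_cut using fun i : Fin r => exists_isCut_between e K (d i + K)
  simp only [Fintype.card_fin] at hmid_le
  set top := ∑ i, d i + ∑ j, e j + K + 1
  have hd_top : ∀ i, d i + K < top := fun i => by
    have := single_le_sum (fun i _ => Nat.zero_le (d i)) (mem_univ i); omega
  have he_top : ∀ j, e j + K < top := fun j => by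
    have := single_le_sum (fun j _ => Nat.zero_le (e j)) (mem_univ j); omega
  refine ⟨fun k => if k = 0 then top else if h : k < r then mid ⟨k, h⟩ else 0,
    by simp [hr.ne'], fun j => show e j < top by have := he_top j; omega, fun k => ?_⟩
  rcases Nat.eq_zero_or_pos k with rfl | hk
  · refine ⟨fun i _ => hd_top i, fun j _ => he_top j, fun i => iff_of_false ?_ (Nat.not_lt_zero _)⟩
    show ¬ top ≤ d i
    have := hd_top i
    omega
  by_cases hkr : k < r
  · simp only [hk.ne', if_false, dif_pos hkr]
    have hmid : ∀ i : Fin r, mid ⟨k, hkr⟩ ≤ d i ↔ (i : ℕ) < k := fun i => by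
      constructor
      · intro h
        by_contra hik
        have := hd.antitone (show (⟨k, hkr⟩ : Fin r) ≤ i from not_lt.mp hik)
        have := hmid_gt ⟨k, hkr⟩
        omega
      · intro hik
        have := hsep i ⟨k, hkr⟩ hik
        have := hmid_le ⟨k, hkr⟩
        omega
    refine ⟨fun i hi => ?_, hmid_cut _, hmid⟩
    have := hd.antitone
      (show (⟨k, hkr⟩ : Fin r) ≤ i from not_lt.mp ((hmid i).not.mp (not_le.mpr hi)))
    have := hmid_gt ⟨k, hkr⟩
    omega
  · simp only [hk.ne', if_false, dif_neg hkr]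
    exact ⟨fun i hi => absurd hi (Nat.not_lt_zero _), fun j hj => absurd hj (Nat.not_lt_zero _),
      fun i => iff_of_true (Nat.zero_le _) (by omega)⟩

theorem exists_block_decomposition {X : Type*} (hq : 2 ≤ q) (hr : 0 < r)
    {a : Fin r → X → ℕ} {b : Fin l → X → ℕ} (ha : ∀ i x, a i x ≤ q ^ K)
    (hb : ∀ j x, b j x ≤ q ^ K) {d : Fin r → ℕ} {e : Fin l → ℕ} (hd : StrictAnti d)
    (he : StrictAnti e) (hsep : ∀ i i', i < i' → d i' + (K + (K + 1) * (l + 1)) ≤ d i)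
    (hsum : ∀ x, ∑ i, q ^ d i * a i x = ∑ j, q ^ e j * b j x) :
    ∃ c : ℕ → ℕ, c r = 0 ∧ (∀ j, e j < c 0) ∧
      ∀ i : Fin r, ∀ x,
        q ^ d i * a i x = ∑ j with c (i + 1) ≤ e j ∧ e j < c i, q ^ e j * b j x := by
  obtain ⟨c, hcr, hc0, hcut⟩ := exists_cuts (e := e) hr hd hsep
  refine ⟨c, hcr, hc0, fun i x => ?_⟩
  obtain ⟨hd₁, he₁, hc₁⟩ := hcut (i + 1)
  obtain ⟨hd₀, he₀, hc₀⟩ := hcut i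
  have hle : c (i + 1) ≤ c i :=
    ((hc₁ i).mpr (by omega)).trans (not_le.mp ((hc₀ i).not.mpr (lt_irrefl _))).le
  have hblock : (univ.filter fun i' => c (i + 1) ≤ d i' ∧ d i' < c i) = {i} := by
    ext i'
    simp only [mem_filter, mem_univ, true_and, mem_singleton, hc₁, ← not_le, hc₀, Fin.ext_iff]
    omega
  rw [← sum_filter_Ico_eq_of_isCut hq hd.injective he.injective (ha · x) (hb · x) (hsum x) hle
    hd₁ he₁ hd₀ he₀, hblock, sum_singleton]

end Blocks

theorem lt_card_filter_le_iff {l : ℕ} {e : Fin l → ℕ} (he : Antitone e) (c : ℕ) (j : Fin l) :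
    (j : ℕ) < #{j' | c ≤ e j'} ↔ c ≤ e j := by
  constructor
  · intro hj
    by_contra hej
    have hsub : ({j' | c ≤ e j'} : Finset (Fin l)) ⊆ Iio j := fun j' hj' => by
      rw [mem_Iio]
      by_contra h
      exact hej ((mem_filter.mp hj').2.trans (he (not_lt.mp h)))
    have := card_le_card hsub
    rw [Fin.card_Iio] at this
    omega
  · intro hej
    have hsub : Iic j ⊆ ({j' | c ≤ e j'} : Finset (Fin l)) := fun j' hj' =>
      mem_filter.mpr ⟨mem_univ _, hej.trans (he (mem_Iic.mp hj'))⟩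
    have := card_le_card hsub
    rw [Fin.card_Iic] at this
    omega

theorem exists_strictMono_block_bounds {r l : ℕ} {e : Fin l → ℕ} (he : Antitone e) {c : ℕ → ℕ}
    (hc0 : ∀ j, e j < c 0) (hcr : c r = 0) (hne : ∀ i : Fin r, ∃ j, c (i + 1) ≤ e j ∧ e j < c i) :
    ∃ h : Fin (r + 1) → ℕ, h 0 = 0 ∧ h (Fin.last r) = l ∧ StrictMono h ∧
      ∀ (i : Fin r) (j : Fin l),
        (h i.castSucc ≤ (j : ℕ) ∧ (j : ℕ) < h i.succ ↔ c (i + 1) ≤ e j ∧ e j < c i) := by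
  have hblock : ∀ (i : Fin r) (j : Fin l),
      #{j' | c i ≤ e j'} ≤ (j : ℕ) ∧ (j : ℕ) < #{j' | c (i + 1) ≤ e j'} ↔
        c (i + 1) ≤ e j ∧ e j < c i := fun i j => by
    rw [← not_lt, lt_card_filter_le_iff he, lt_card_filter_le_iff he, not_le, and_comm]
  refine ⟨fun k => #{j | c k ≤ e j}, ?_, ?_, Fin.strictMono_iff_lt_succ.2 fun i => ?_,
    fun i j => by simpa using hblock i j⟩
  · exact card_eq_zero.mpr (filter_eq_empty_iff.mpr fun j _ => not_le.mpr (hc0 j))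
  · simp [hcr]
  · obtain ⟨j, hj⟩ := hne i
    have := (hblock i j).mpr hj
    simp only [Fin.val_castSucc, Fin.val_succ]
    omega

theorem val_le_of_strictMono {n : ℕ} {h : Fin (n + 1) → ℕ} (hh : StrictMono h) (k : Fin (n + 1)) :
    (k : ℕ) ≤ h k := by
  induction k using Fin.induction with
  | zero => exact Nat.zero_le _
  | succ i ih =>
    have := hh (Fin.castSucc_lt_succ (i := i))
    simp only [Fin.val_castSucc, Fin.val_succ] at ih ⊢
    omega

theorem natCast_eq_sum_zpow_of_pow_mul_eq {ι : Type*} {s : Finset ι} {q n a : ℕ} {e b : ι → ℕ}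
    (hq : q ≠ 0) (h : q ^ n * a = ∑ j ∈ s, q ^ e j * b j) :
    (a : ℚ) = ∑ j ∈ s, (q : ℚ) ^ ((e j : ℤ) - n) * b j := by
  have hq₀ : (q : ℚ) ≠ 0 := Nat.cast_ne_zero.mpr hq
  have hq' : (q : ℚ) ^ n ≠ 0 := pow_ne_zero _ hq₀
  simp_rw [zpow_sub₀ hq₀, zpow_natCast, div_mul_eq_mul_div, ← sum_div,
    eq_div_iff hq', mul_comm (a : ℚ)]
  exact_mod_cast h

theorem exists_forall_apply_le_pow {q r l : ℕ} (hq : 2 ≤ q) (α : Fin r → (ℕ →₀ ℕ))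
    (β : Fin l → (ℕ →₀ ℕ)) : ∃ K, (∀ i x, α i x ≤ q ^ K) ∧ ∀ j x, β j x ≤ q ^ K := by
  have bound : ∀ {n : ℕ} (f : Fin n → (ℕ →₀ ℕ)), ∃ M, ∀ i x, f i x ≤ M := fun f => by
    obtain ⟨M, hM⟩ := (Set.finite_iUnion fun i => (f i).finite_range).bddAbove
    exact ⟨M, fun i x => hM (Set.mem_iUnion.2 ⟨i, x, rfl⟩)⟩
  obtain ⟨Mα, hMα⟩ := bound α
  obtain ⟨Mβ, hMβ⟩ := bound β
  have hpow : Mα + Mβ ≤ q ^ (Mα + Mβ) := (Nat.lt_pow_self (by omega)).le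
  exact ⟨Mα + Mβ, fun i x => by linarith [hMα i x], fun j x => by linarith [hMβ j x]⟩

theorem GoodSeq.exists_separated {r : ℕ} {D : ℕ → Fin r → ℕ} (hD : GoodSeq r D) (G : ℕ) :
    ∃ m, ∀ i i' : Fin r, i < i' → D m i' + G ≤ D m i := by
  have hev : ∀ᶠ m in atTop, ∀ i : Fin r, ∀ h : (i : ℕ) + 1 < r,
      G ≤ D m i - D m ⟨i + 1, h⟩ := by
    refine eventually_all.2 fun i => ?_
    by_cases h : (i : ℕ) + 1 < r
    · filter_upwards [(hD.2.2 i h).eventually_ge_atTop G] with m hm _ using hm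
    · exact Eventually.of_forall fun m h' => absurd h' h
  obtain ⟨m, hm⟩ := hev.exists
  refine ⟨m, fun i i' hii' => ?_⟩
  have hi : (i : ℕ) + 1 < r := by have := i'.isLt; rw [Fin.lt_def] at hii'; omega
  have := hm i hi
  have := (hD.1 m).antitone (show (⟨i + 1, hi⟩ : Fin r) ≤ i' from Fin.le_def.mpr hii')
  have := hD.1 m (show i < ⟨i + 1, hi⟩ from Fin.lt_def.mpr (Nat.lt_succ_self _))
  omega

theorem Prec.exists_separated_stage {q r l : ℕ} {α : Fin r → (ℕ →₀ ℕ)} {β : Fin l → (ℕ →₀ ℕ)}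
    (h : Prec q α β) (G : ℕ) :
    ∃ d : Fin r → ℕ, StrictAnti d ∧ (∀ i i', i < i' → d i' + G ≤ d i) ∧
      ∃ e : Fin l → ℕ, StrictAnti e ∧ ∀ x, ∑ i, q ^ d i * α i x = ∑ j, q ^ e j * β j x := by
  obtain ⟨D, hD, hmem⟩ := h
  obtain ⟨m, hm⟩ := hD.exists_separated G
  obtain ⟨e, he, heq⟩ := hmem m
  exact ⟨D m, hD.1 m, hm, e, he, fun x => by
    simpa [Finsupp.finsetSum_apply] using DFunLike.congr_fun heq x⟩

theorem cluster_ordering_structure_general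
    (q p e : ℕ) (hp : p.Prime) (he : 0 < e) (hq : q = p ^ e)
    (r l : ℕ) (hr : 0 < r)
    (α : Fin r → (ℕ →₀ ℕ)) (β : Fin l → (ℕ →₀ ℕ))
    (hα : ∀ i, α i ≠ 0)
    (hprec : Prec q α β) :
    r ≤ l ∧ ∃ h : Fin (r + 1) → ℕ, h 0 = 0 ∧ h (Fin.last r) = l ∧ StrictMono h ∧
      ∃ κ : Fin r → Fin l → ℤ, ∀ i : Fin r, ∀ x : ℕ,
        ((α i x : ℚ)) = ∑ j : Fin l,
          (if h i.castSucc ≤ (j : ℕ) ∧ (j : ℕ) < h i.succ then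
            (q : ℚ) ^ (κ i j) * (β j x : ℚ) else 0) := by
  have hq2 : 2 ≤ q := hq ▸ hp.two_le.trans (Nat.le_self_pow he.ne' p)
  obtain ⟨K, hαK, hβK⟩ := exists_forall_apply_le_pow hq2 α β
  obtain ⟨d, hd, hsep, E, hE, hsum⟩ := hprec.exists_separated_stage (K + (K + 1) * (l + 1))
  obtain ⟨c, hcr, hc0, hblock⟩ := exists_block_decomposition hq2 hr hαK hβK hd hE hsep hsum
  have hne : ∀ i : Fin r, ∃ j, c (i + 1) ≤ E j ∧ E j < c i := fun i => by
    obtain ⟨x, hx⟩ := Finsupp.support_nonempty_iff.mpr (hα i)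
    obtain ⟨j, hj, -⟩ := exists_ne_zero_of_sum_ne_zero <| hblock i x ▸
      mul_ne_zero (pow_ne_zero _ (by omega)) (Finsupp.mem_support_iff.mp hx)
    exact ⟨j, (mem_filter.mp hj).2⟩
  obtain ⟨h, h0, hlast, hmono, hcond⟩ := exists_strictMono_block_bounds hE.antitone hc0 hcr hne
  refine ⟨hlast ▸ val_le_of_strictMono hmono (Fin.last r), h, h0, hlast, hmono,
    fun i j => (E j : ℤ) - d i, fun i x => ?_⟩
  rw [natCast_eq_sum_zpow_of_pow_mul_eq (by omega) (hblock i x), sum_filter]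
  exact sum_congr rfl fun j _ => if_congr (hcond i j).symm rfl rfl

/-- **Structure of the cluster ordering.**  If `[α_1, …, α_r] ≺ [β_1, …, β_l]` (for `q = p^e`
a prime power), then `r ≤ l` and there are `0 = h_0 < h_1 < ⋯ < h_r = l` and integers
`κ_{i,j}` such that `α_i = β_{h_{i−1}+1} q^{κ_{i,h_{i−1}+1}} + ⋯ + β_{h_i} q^{κ_{i,h_i}}`
(as functions with values in `ℚ`), for every `i = 1, …, r`. -/
theorem cluster_ordering_structure
    (q p e : ℕ) (hp : p.Prime) (he : 0 < e) (hq : q = p ^ e)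
    (r l : ℕ) (hr : 0 < r) (hl : 0 < l)
    (α : Fin r → (ℕ →₀ ℕ)) (β : Fin l → (ℕ →₀ ℕ))
    (hα : ∀ i, α i ≠ 0) (hβ : ∀ i, β i ≠ 0)
    (hprec : Prec q α β) :
    r ≤ l ∧ ∃ h : Fin (r + 1) → ℕ, h 0 = 0 ∧ h (Fin.last r) = l ∧ StrictMono h ∧
      ∃ κ : Fin r → Fin l → ℤ, ∀ i : Fin r, ∀ x : ℕ,
        ((α i x : ℚ)) = ∑ j : Fin l,
          (if h i.castSucc ≤ (j : ℕ) ∧ (j : ℕ) < h i.succ then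
            (q : ℚ) ^ (κ i j) * (β j x : ℚ) else 0) :=
  cluster_ordering_structure_general q p e hp he hq r l hr α β hα hprec

end PaperClusters
end
end

section
/- Let U be a finite subset of ℕ* with |U| < q. Then for every d ≥ 0 the identity ∑_{a ∈ A⁺, deg a = d} (∏_{i∈U} a(t_i)) / a = (∏_{i∈U} b_d(t_i)) / l_d holds in K[t_i : i ∈ U]. -/
/- Setting: `Fq` is the finite field with `q` elements, `A = Fq[θ]` (`θ = Polynomial.X`),
`A⁺` the monic polynomials (parametrized by their lower-order coefficients),
`K = Fq(θ) = RatFunc Fq`, and `K∞ = Fq((1/θ)) = FunctionField.FqtInfty Fq`,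
the completion of `K` at the place at infinity, with its valuation topology. -/

open scoped Classical

noncomputable section

namespace PaperMZV

variable (Fq : Type) [Field Fq] [Fintype Fq]

/-- The monic polynomial of degree `d` with lower-order coefficients `c`; as `c` runs through
`Fin d → Fq` this enumerates the monic elements of `A` of degree `d`. -/
def monicPoly (d : ℕ) (c : Fin d → Fq) : Polynomial Fq :=
  Polynomial.X ^ d + ∑ i : Fin d, Polynomial.C (c i) * Polynomial.X ^ (i : ℕ)

/-- The embedding `A = Fq[θ] → K = Fq(θ)`. -/
def AtoK : Polynomial Fq →+* RatFunc Fq := algebraMap _ _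

/-- The power sum `S_d(n) = ∑_{a ∈ A⁺, deg a = d} a^{-n} ∈ K`. -/
def Sval (n : ℤ) (d : ℕ) : RatFunc Fq :=
  ∑ c : Fin d → Fq, (AtoK Fq (monicPoly Fq d c)) ^ (-n)

/-- `a(t_i)`: the image of `a ∈ Fq[θ]` under the `Fq`-algebra map `θ ↦ t_i`. -/
def atT (i : ℕ) (a : Polynomial Fq) : MvPolynomial ℕ (RatFunc Fq) :=
  Polynomial.aeval (MvPolynomial.X i) a

/-- `χ_Σ(a) = ∏_i a(t_i)^{Σ(i)}` for a finite weighted subset `Σ : ℕ →₀ ℕ`. -/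
def chi (s : ℕ →₀ ℕ) (a : Polynomial Fq) : MvPolynomial ℕ (RatFunc Fq) :=
  s.prod fun i k => (atT Fq i a) ^ k

/-- The twisted power sum `∑_{a ∈ A⁺, deg a = d} χ_Σ(a)/a^n ∈ K[t]`. -/
def powS (s : ℕ →₀ ℕ) (n : ℤ) (d : ℕ) : MvPolynomial ℕ (RatFunc Fq) :=
  ∑ c : Fin d → Fq,
    chi Fq s (monicPoly Fq d c) * MvPolynomial.C ((AtoK Fq (monicPoly Fq d c)) ^ (-n))

/-- Composition arrays: finite sequences of pairs (finite weighted subset `Σ_i`, integer `n_i`). -/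
abbrev CompArray : Type := List ((ℕ →₀ ℕ) × ℤ)

/-- The weight `n_1 + ⋯ + n_r` of a composition array. -/
def weight (C : CompArray) : ℤ := (C.map Prod.snd).sum

/-- The type `Σ_1 ⋯ Σ_r` (pointwise sum) of a composition array. -/
def ctype (C : CompArray) : ℕ →₀ ℕ := (C.map Prod.fst).sum

/-- A composition array is admissible if all `n_i ≥ 1`. -/
def Admissible (C : CompArray) : Prop := ∀ x ∈ C, 1 ≤ x.2

/-- Auxiliary truncated multiple sum: `SltAux C d = ∑_{d > d_1 > ⋯ > d_r ≥ 0} ∏ S_{d_i}`-terms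
(equal to `1` on the empty array, for every `d`). -/
def SltAux : CompArray → ℕ → MvPolynomial ℕ (RatFunc Fq)
  | [], _ => 1
  | (s, n) :: rest, d => ∑ e ∈ Finset.range d, powS Fq s n e * SltAux rest e

/-- The multiple twisted power sum
`S_d(C) = ∑_{d = d_1 > ⋯ > d_r ≥ 0} ∑ χ_{Σ_1}(a_1)⋯χ_{Σ_r}(a_r)/(a_1^{n_1}⋯a_r^{n_r})`. -/
def Sd : CompArray → ℕ → MvPolynomial ℕ (RatFunc Fq)
  | [], d => if d = 0 then 1 else 0
  | (s, n) :: rest, d => powS Fq s n d * SltAux Fq rest d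

/-- `S_{<d}(C) = ∑_{0 ≤ j < d} S_j(C)`. -/
def Slt (C : CompArray) (d : ℕ) : MvPolynomial ℕ (RatFunc Fq) :=
  ∑ j ∈ Finset.range d, Sd Fq C j

/-- The embedding of `K` into its completion `K∞ = Fq((1/θ))` at the infinite place. -/
def KtoKinf : RatFunc Fq →+* RatFunc.CompletionAtInfty Fq := by
  letI := RatFunc.inftyValued Fq
  exact UniformSpace.Completion.coeRingHom

/-- The multiple zeta value `ζ_A(C) = ∑_{d ≥ 0} S_d(C)`, a formal power series in the `t_i`
over `K∞`, each coefficient being a (convergent) sum in `K∞`. -/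
def zeta (C : CompArray) : MvPowerSeries ℕ (RatFunc.CompletionAtInfty Fq) :=
  fun m => ∑' d : ℕ, KtoKinf Fq (MvPolynomial.coeff m (Sd Fq C d))

/-- The image of a polynomial in the `t_i` over `K` inside formal power series over `K∞`. -/
def toPS (P : MvPolynomial ℕ (RatFunc Fq)) : MvPowerSeries ℕ (RatFunc.CompletionAtInfty Fq) :=
  fun m => KtoKinf Fq (MvPolynomial.coeff m P)

/-- `b_i(t_v) = (t_v − θ)(t_v − θ^q)⋯(t_v − θ^{q^{i−1}})`. -/
def bMv (i : ℕ) (v : ℕ) : MvPolynomial ℕ (RatFunc Fq) :=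
  ∏ k ∈ Finset.range i, (MvPolynomial.X v - MvPolynomial.C (RatFunc.X ^ (Fintype.card Fq) ^ k))

/-- `l_i = (θ − θ^q)⋯(θ − θ^{q^i})`. -/
def lel (i : ℕ) : RatFunc Fq :=
  ∏ k ∈ Finset.range i, (RatFunc.X - RatFunc.X ^ (Fintype.card Fq) ^ (k + 1))

/-- `D_i = (θ^{q^i} − θ^{q^{i−1}})⋯(θ^{q^i} − θ)`. -/
def Del (i : ℕ) : RatFunc Fq :=
  ∏ k ∈ Finset.range i, (RatFunc.X ^ (Fintype.card Fq) ^ i - RatFunc.X ^ (Fintype.card Fq) ^ k)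

/-- The monomial `∏_i X_i^{Σ(i)·q^d}`. -/
def monomX (s : ℕ →₀ ℕ) (d : ℕ) : MvPolynomial ℕ (RatFunc Fq) :=
  s.prod fun i k => (MvPolynomial.X i) ^ (k * (Fintype.card Fq) ^ d)

/-- Auxiliary truncated multiple polylogarithm sum. -/
def lamAux : CompArray → ℕ → MvPolynomial ℕ (RatFunc Fq)
  | [], _ => 1
  | (s, n) :: rest, d =>
      ∑ e ∈ Finset.range d, MvPolynomial.C (Sval Fq n e) * monomX Fq s e * lamAux rest e

/-- The `d_1 = d` part of the multiple polylogarithm `λ_A(C)`. -/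
def lamHead : CompArray → ℕ → MvPolynomial ℕ (RatFunc Fq)
  | [], d => if d = 0 then 1 else 0
  | (s, n) :: rest, d => MvPolynomial.C (Sval Fq n d) * monomX Fq s d * lamAux Fq rest d

/-- The multiple polylogarithm
`λ_A(C) = ∑_{d_1 > ⋯ > d_r ≥ 0} S_{d_1}(n_1)⋯S_{d_r}(n_r)·∏_i X_i^{∑_j Σ_j(i) q^{d_j}}`,
a formal power series in the `X_i` over `K∞`, each coefficient a convergent sum in `K∞`. -/
def lam (C : CompArray) : MvPowerSeries ℕ (RatFunc.CompletionAtInfty Fq) :=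
  fun m => ∑' d : ℕ, KtoKinf Fq (MvPolynomial.coeff m (lamHead Fq C d))

/-- The multiple polylogarithm `λ_A(C)` as a formal power series over `K` (used when each
coefficient is a finite sum in `K`). -/
def lamK (C : CompArray) : MvPowerSeries ℕ (RatFunc Fq) :=
  fun m => ∑ᶠ d : ℕ, MvPolynomial.coeff m (lamHead Fq C d)

/-- Auxiliary truncated multiple power sum (untwisted, scalar valued). -/
def SltAuxV : List ℤ → ℕ → RatFunc Fq
  | [], _ => 1
  | n :: rest, d => ∑ e ∈ Finset.range d, Sval Fq n e * SltAuxV rest e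

/-- The multiple power sum `S_d(n_1, …, n_r) = ∑_{d = d_1 > ⋯ > d_r ≥ 0} S_{d_1}(n_1)⋯S_{d_r}(n_r)`. -/
def SdV : List ℤ → ℕ → RatFunc Fq
  | [], d => if d = 0 then 1 else 0
  | n :: rest, d => Sval Fq n d * SltAuxV Fq rest d

/-- Thakur's multiple zeta value `ζ_A(n_1, …, n_r) = ∑_{d ≥ 0} S_d(n_1, …, n_r) ∈ K∞`. -/
def zetaV (ns : List ℤ) : RatFunc.CompletionAtInfty Fq :=
  ∑' d : ℕ, KtoKinf Fq (SdV Fq ns d)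

/-- The finite weighted subset (indicator) attached to a finite subset of variable indices. -/
def indic (U : Finset ℕ) : ℕ →₀ ℕ := ∑ i ∈ U, Finsupp.single i 1

/-- `S_d(U; n) = ∑_{a ∈ A⁺, deg a = d} (∏_{i∈U} a(t_i))·a^{−n} ∈ K[t_i : i ∈ U]`. -/
def SdU (U : Finset ℕ) (n : ℤ) (d : ℕ) : MvPolynomial ℕ (RatFunc Fq) :=
  ∑ c : Fin d → Fq,
    (∏ i ∈ U, atT Fq i (monicPoly Fq d c)) *
      MvPolynomial.C ((AtoK Fq (monicPoly Fq d c)) ^ (-n))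

/-!
Induction on `U`. For `U = ∅` the formula is Carlitz's identity `∑_{a ∈ A⁺_d} 1/a = 1/l_d`. It comes
from the `𝔽_q`-linear polynomial `e_d(y) = ∏_{deg b < d} (y - b)`: summing `1/(u + x v)` over
`x ∈ 𝔽_q` (the logarithmic derivative of `X^q - X`) gives by induction on `d`
`∑_{deg b < d} 1/(y + b) = D_d / (l_d e_d(y))`, and `e_d(θ^d) = D_d` because `e_d(θ^{d+j})` is
`D_d` times the complete homogeneous symmetric function `h_j(θ, θ^q, …, θ^{q^d})`.

For `U = U' ∪ {i}`, the polynomial `F(T) = ∑_{a ∈ A⁺_d} (∏_{j ∈ U'} a(t_j)) a(T)/a` has degree `d`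
and leading coefficient `S_d(U')`. At `T = θ^{q^k}` with `k < d` its value is a sum, over the
affine space `A⁺_d ≅ 𝔽_q^d`, of a product of `|U'| + k(q - 1) < d(q - 1)` affine functions, which
vanishes by the Chevalley–Warning argument. Hence `F(T) = S_d(U') b_d(T)`, and `T = t_i` gives the
induction step.
-/

section FiniteFieldAlgebra

open Polynomial

variable {F L : Type*} [Field F] [Fintype F]

local notation "q" => Fintype.card F

theorem frobeniusAlgHom_pow_apply [CommRing L] [Algebra F L] (m : ℕ) (y : L) :
    (FiniteField.frobeniusAlgHom F L ^ m) y = y ^ q ^ m := by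
  rw [AlgHom.coe_pow, FiniteField.coe_frobeniusAlgHom, pow_iterate]

theorem sub_pow_card [CommRing L] [Algebra F L] (a b : L) : (a - b) ^ q = a ^ q - b ^ q :=
  map_sub (FiniteField.frobeniusAlgHom F L) a b

theorem natCast_card_eq_zero [CommRing L] [Algebra F L] : (q : L) = 0 := by
  rw [← map_natCast (algebraMap F L), FiniteField.cast_card_eq_zero, map_zero]

theorem add_algebraMap_mul_ne_zero [CommRing L] [Algebra F L] {u v : L}
    (h : u ^ q - v ^ (q - 1) * u ≠ 0) (x : F) : u + algebraMap F L x * v ≠ 0 := by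
  intro h0
  apply h
  rw [eq_neg_of_add_eq_zero_left h0, ← neg_mul, ← map_neg, mul_pow, ← map_pow,
    FiniteField.pow_card, mul_left_comm, pow_sub_one_mul Fintype.card_ne_zero, sub_self]

variable [Field L] [Algebra F L]

theorem sum_inv_add_algebraMap {w : L} (hw : w ^ q - w ≠ 0) :
    ∑ x : F, (w + algebraMap F L x)⁻¹ = -(w ^ q - w)⁻¹ := by
  have hsplit : (X ^ q - X : F[X]).Splits := by
    rw [splits_iff_card_roots, FiniteField.roots_X_pow_card_sub_X,
      FiniteField.X_pow_card_sub_X_natDegree_eq F Fintype.one_lt_card]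
    rfl
  set P := (X ^ q - X : F[X]).map (algebraMap F L)
  have hroots : P.roots = Finset.univ.val.map (algebraMap F L) := by
    rw [hsplit.roots_map, FiniteField.roots_X_pow_card_sub_X]
  have hderiv : derivative P = -1 := by
    simp [P, derivative_X_pow, natCast_card_eq_zero]
  have heval : P.eval w = w ^ q - w := by simp [P]
  have := (hsplit.map (algebraMap F L)).eval_derivative_div_eval_of_ne_zero (heval ▸ hw)
  rw [hderiv, heval, hroots] at this
  rw [← Equiv.sum_comp (Equiv.neg F)]
  simpa [sub_eq_add_neg, neg_div, one_div] using this.symm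

theorem sum_inv_add_algebraMap_mul {u v : L} (h : u ^ q - v ^ (q - 1) * u ≠ 0) :
    ∑ x : F, (u + algebraMap F L x * v)⁻¹ = -v ^ (q - 1) / (u ^ q - v ^ (q - 1) * u) := by
  rcases eq_or_ne v 0 with rfl | hv
  · simp [zero_pow (Nat.sub_ne_zero_of_lt Fintype.one_lt_card), natCast_card_eq_zero]
  have hkey : u ^ q - v ^ (q - 1) * u = v ^ q * ((u / v) ^ q - u / v) := by
    obtain ⟨n, hn⟩ := Nat.exists_eq_add_one.mpr (Fintype.card_pos (α := F))
    rw [hn, Nat.add_sub_cancel, div_pow]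
    field_simp
    ring
  have hw : (u / v) ^ q - u / v ≠ 0 := right_ne_zero_of_mul (hkey ▸ h)
  calc ∑ x : F, (u + algebraMap F L x * v)⁻¹ = v⁻¹ * ∑ x : F, (u / v + algebraMap F L x)⁻¹ := by
        rw [Finset.mul_sum]
        refine Finset.sum_congr rfl fun x _ => ?_
        rw [← mul_inv, mul_add, mul_div_cancel₀ _ hv, mul_comm v]
    _ = -v ^ (q - 1) / (u ^ q - v ^ (q - 1) * u) := by
        rw [sum_inv_add_algebraMap hw, hkey, ← pow_sub_one_mul Fintype.card_ne_zero v]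
        field_simp

end FiniteFieldAlgebra

section ChevalleyWarning

open MvPolynomial

variable {F W σ : Type*} [Field F] [Fintype F] [CommRing W] [Algebra F W] [Fintype σ]
  [DecidableEq σ]

local notation "q" => Fintype.card F

theorem sum_eval_algebraMap_eq_zero (f : MvPolynomial σ W)
    (h : f.totalDegree < (q - 1) * Fintype.card σ) :
    ∑ x : σ → F, eval (fun i => algebraMap F W (x i)) f = 0 := by
  simp_rw [eval_eq', Finset.sum_comm (γ := σ → F)]
  refine Finset.sum_eq_zero fun m hm => ?_
  have hm' : (monomial m (1 : F)).totalDegree < (q - 1) * Fintype.card σ :=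
    (totalDegree_monomial_le m 1).trans_lt ((le_totalDegree hm).trans_lt h)
  have := congrArg (algebraMap F W) (sum_eval_eq_zero _ hm')
  simp only [eval_eq', map_sum, map_zero, map_mul, map_prod, map_pow] at this
  rw [← Finset.mul_sum]
  simpa [coeff_monomial] using congrArg (coeff m f * ·) this

variable {M ι : Type*} [AddCommGroup M] [Module F M]

theorem sum_prod_pow_linearMap_eq_zero (s : Finset ι) (n : ι → ℕ) (L : ι → M →ₗ[F] W) (m : M)
    (v : σ → M) (hs : ∑ i ∈ s, n i < (q - 1) * Fintype.card σ) :
    ∑ c : σ → F, ∏ i ∈ s, L i (m + ∑ k, c k • v k) ^ n i = 0 := by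
  let ℓ : ι → MvPolynomial σ W := fun i => C (L i m) + ∑ k, C (L i (v k)) * X k
  have hℓ : ∀ i, (ℓ i).totalDegree ≤ 1 := by
    intro i
    refine (totalDegree_add _ _).trans (max_le (by simp) ?_)
    refine (totalDegree_finsetSum _ _).trans (Finset.sup_le fun k _ => ?_)
    rw [C_mul_X_eq_monomial]
    exact (totalDegree_monomial_le _ _).trans (by simp)
  have hdeg : (∏ i ∈ s, ℓ i ^ n i).totalDegree ≤ ∑ i ∈ s, n i :=
    (totalDegree_finsetProd _ _).trans <| Finset.sum_le_sum fun i _ =>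
      (totalDegree_pow _ _).trans (by simpa using Nat.mul_le_mul_left (n i) (hℓ i))
  rw [← sum_eval_algebraMap_eq_zero _ (hdeg.trans_lt hs)]
  refine Finset.sum_congr rfl fun c _ => ?_
  simp [ℓ, Algebra.smul_def, mul_comm]

end ChevalleyWarning

section Interpolation

open Polynomial

variable {R ι : Type*} [CommRing R] [IsDomain R]

theorem eq_C_coeff_mul_prod_X_sub_C_of_eval_eq_zero {p : R[X]} (s : Finset ι) {v : ι → R}
    (hv : Set.InjOn v s) (hp : p.natDegree ≤ s.card) (hroot : ∀ i ∈ s, p.eval (v i) = 0) :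
    p = C (p.coeff s.card) * ∏ i ∈ s, (X - C (v i)) := by
  have hmonic : (∏ i ∈ s, (X - C (v i))).Monic :=
    monic_prod_of_monic _ _ fun i _ => monic_X_sub_C _
  have hdeg : (∏ i ∈ s, (X - C (v i))).natDegree = s.card := by
    simp [natDegree_prod_of_monic _ _ fun i _ => monic_X_sub_C (v i)]
  refine eq_of_degree_sub_lt_of_eval_index_eq s hv ?_ fun i hi => by
    simp [hroot i hi, eval_prod, Finset.prod_eq_zero hi]
  rw [degree_lt_iff_coeff_zero]
  intro m hm
  rcases hm.eq_or_lt with rfl | hlt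
  · rw [coeff_sub, coeff_C_mul, ← hdeg, hmonic.coeff_natDegree, hdeg, mul_one, sub_self]
  · rw [coeff_sub, coeff_C_mul, coeff_eq_zero_of_natDegree_lt (hp.trans_lt hlt),
      coeff_eq_zero_of_natDegree_lt (hdeg.trans_lt hlt), mul_zero, sub_zero]

variable {F κ : Type*} [CommRing F] [Algebra F R] [Fintype κ]

theorem sum_mul_aeval_eq_sum_mul_prod_of_aeval_eq_zero (p : κ → F[X]) (w : κ → R)
    (s : Finset ι) {x : ι → R} (hx : Set.InjOn x s) (hp : ∀ c, (p c).Monic)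
    (hdeg : ∀ c, (p c).natDegree = s.card) (hw : ∀ i ∈ s, ∑ c, w c * aeval (x i) (p c) = 0)
    (r : R) : ∑ c, w c * aeval r (p c) = (∑ c, w c) * ∏ i ∈ s, (r - x i) := by
  set G : R[X] := ∑ c, C (w c) * (p c).map (algebraMap F R)
  have hG : ∀ y, G.eval y = ∑ c, w c * aeval y (p c) := by
    simp [G, eval_finsetSum, eval_map_algebraMap]
  have hGdeg : G.natDegree ≤ s.card := natDegree_sum_le_of_forall_le _ _ fun c _ =>
    (natDegree_C_mul_le _ _).trans (natDegree_map_le.trans (hdeg c).le)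
  have hGcoeff : G.coeff s.card = ∑ c, w c := by
    refine (finsetSum_coeff _ _ _).trans (Finset.sum_congr rfl fun c _ => ?_)
    rw [coeff_C_mul, coeff_map, ← hdeg c, (hp c).coeff_natDegree, map_one, mul_one]
  rw [← hG, eq_C_coeff_mul_prod_X_sub_C_of_eval_eq_zero s hx hGdeg
    fun i hi => (hG _).trans (hw i hi), hGcoeff, eval_mul, eval_C, eval_prod]
  simp

end Interpolation

section CompleteSymm

variable {R S : Type*} [CommRing R] [CommRing S]

/-- `completeSymm x d j = h_j(x 0, …, x d)`, the complete homogeneous symmetric polynomial of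
degree `j` evaluated at the first `d + 1` terms of `x`. -/
def completeSymm (x : ℕ → R) : ℕ → ℕ → R
  | 0, j => x 0 ^ j
  | d + 1, j => ∑ i ∈ Finset.range (j + 1), x (d + 1) ^ i * completeSymm x d (j - i)

theorem completeSymm_zero_right (x : ℕ → R) (d : ℕ) : completeSymm x d 0 = 1 := by
  induction d <;> simp [completeSymm, *]

theorem completeSymm_succ_succ (x : ℕ → R) (d j : ℕ) :
    completeSymm x (d + 1) (j + 1)
      = completeSymm x d (j + 1) + x (d + 1) * completeSymm x (d + 1) j := by
  rw [completeSymm, Finset.sum_range_succ', completeSymm, Finset.mul_sum, add_comm]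
  simp only [pow_zero, one_mul, Nat.sub_zero, Nat.add_sub_add_right, pow_succ]
  exact congrArg _ (Finset.sum_congr rfl fun i _ => by ring)

theorem map_completeSymm (f : R →+* S) (x : ℕ → R) (d j : ℕ) :
    f (completeSymm x d j) = completeSymm (f ∘ x) d j := by
  induction d generalizing j with
  | zero => simp [completeSymm]
  | succ d ih => simp [completeSymm, ih]

theorem completeSymm_comp_succ_sub (x : ℕ → R) (d j : ℕ) :
    completeSymm (x ∘ Nat.succ) d (j + 1) - completeSymm x d (j + 1)
      = (x (d + 1) - x 0) * completeSymm x (d + 1) j := by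
  induction d generalizing j with
  | zero =>
    simp only [completeSymm, Function.comp_apply]
    rw [← geom_sum₂_mul, mul_comm]
    simp
  | succ d ih =>
    induction j with
    | zero =>
      have h0 := ih 0
      rw [completeSymm_succ_succ (x ∘ Nat.succ), completeSymm_succ_succ x d]
      simp only [completeSymm_zero_right, Function.comp_apply] at h0 ⊢
      linear_combination h0
    | succ j ihj =>
      rw [completeSymm_succ_succ (x ∘ Nat.succ) d (j + 1), completeSymm_succ_succ x d (j + 1),
        completeSymm_succ_succ x (d + 1) j]
      simp only [Function.comp_apply] at ihj ⊢
      linear_combination ih (j + 1) + x (d + 2) * ihj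

end CompleteSymm

theorem prod_pow_pow_sub_one {M : Type*} [CommMonoid M] (y : M) {n : ℕ} (hn : n ≠ 0) (k : ℕ) :
    ∏ m ∈ Finset.range k, (y ^ n ^ m) ^ (n - 1) = y ^ (n ^ k - 1) := by
  induction k with
  | zero => simp
  | succ k ih =>
    rw [Finset.prod_range_succ, ih, ← pow_mul, ← pow_add]
    have h1 : 1 ≤ n ^ k := Nat.one_le_pow _ _ (Nat.pos_of_ne_zero hn)
    have h2 : 1 ≤ n ^ (k + 1) := Nat.one_le_pow _ _ (Nat.pos_of_ne_zero hn)
    congr 1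
    zify [h1, h2, Nat.one_le_iff_ne_zero.mpr hn]
    ring

theorem RatFunc.X_pow_injective {F : Type*} [Field F] :
    Function.Injective fun n : ℕ => (RatFunc.X : RatFunc F) ^ n := by
  intro m n h
  have : (Polynomial.X ^ m : Polynomial F) = Polynomial.X ^ n :=
    RatFunc.algebraMap_injective F (by simpa only [map_pow, RatFunc.algebraMap_X] using h)
  simpa using congrArg Polynomial.natDegree this

section MonicPoly

variable {F : Type} [Field F]

theorem monicPoly_monic (d : ℕ) (c : Fin d → F) : (monicPoly F d c).Monic :=
  Polynomial.monic_X_pow_add (Polynomial.degree_sum_fin_lt c)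

theorem natDegree_monicPoly (d : ℕ) (c : Fin d → F) : (monicPoly F d c).natDegree = d := by
  rw [monicPoly, Polynomial.natDegree_add_eq_left_of_degree_lt, Polynomial.natDegree_X_pow]
  simpa using Polynomial.degree_sum_fin_lt c

theorem AtoK_monicPoly_ne_zero (d : ℕ) (c : Fin d → F) : AtoK F (monicPoly F d c) ≠ 0 :=
  (map_ne_zero_iff _ (RatFunc.algebraMap_injective F)).mpr (monicPoly_monic d c).ne_zero

def lowerSum (d : ℕ) (c : Fin d → F) : RatFunc F :=
  ∑ i : Fin d, algebraMap F (RatFunc F) (c i) * RatFunc.X ^ (i : ℕ)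

theorem lowerSum_snoc (d : ℕ) (c : Fin d → F) (x : F) :
    lowerSum (d + 1) (Fin.snoc c x)
      = lowerSum d c + algebraMap F (RatFunc F) x * RatFunc.X ^ d := by
  simp [lowerSum, Fin.sum_univ_castSucc]

theorem AtoK_monicPoly (d : ℕ) (c : Fin d → F) :
    AtoK F (monicPoly F d c) = RatFunc.X ^ d + lowerSum d c := by
  simp [AtoK, monicPoly, lowerSum]

end MonicPoly

section Carlitz

local notation "q" => Fintype.card Fq
local notation "θ" => (RatFunc.X : RatFunc Fq)

theorem Del_succ (d : ℕ) : Del Fq (d + 1) = (θ ^ q ^ (d + 1) - θ) * Del Fq d ^ q := by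
  rw [Del, Finset.prod_range_succ', Del, ← Finset.prod_pow, pow_zero, pow_one, mul_comm]
  refine congrArg _ (Finset.prod_congr rfl fun k _ => ?_)
  rw [sub_pow_card (F := Fq), ← pow_mul, ← pow_mul, pow_succ, pow_succ]

theorem Del_ne_zero (d : ℕ) : Del Fq d ≠ 0 := by
  refine Finset.prod_ne_zero_iff.mpr fun k hk => sub_ne_zero.mpr fun h => ?_
  have := Nat.pow_right_injective (Fintype.one_lt_card (α := Fq)) (RatFunc.X_pow_injective h)
  simp_all

theorem lel_succ (d : ℕ) : lel Fq (d + 1) = lel Fq d * (θ - θ ^ q ^ (d + 1)) :=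
  Finset.prod_range_succ _ _

theorem lel_ne_zero (d : ℕ) : lel Fq d ≠ 0 := by
  refine Finset.prod_ne_zero_iff.mpr fun k _ => sub_ne_zero.mpr fun h => ?_
  have := RatFunc.X_pow_injective ((pow_one θ).trans h)
  have := Nat.one_lt_pow (n := k + 1) (by omega) (Fintype.one_lt_card (α := Fq))
  omega

/-- Carlitz's `e_d(y) = ∏_{deg b < d} (y - b)`, introduced through the recursion it satisfies, which
makes it `𝔽_q`-linear by construction. -/
def carlitzE : ℕ → (RatFunc Fq →ₗ[Fq] RatFunc Fq)
  | 0 => LinearMap.id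
  | d + 1 => (FiniteField.frobeniusAlgHom Fq (RatFunc Fq)).toLinearMap ∘ₗ carlitzE d
      - carlitzE d (θ ^ d) ^ (q - 1) • carlitzE d

theorem carlitzE_zero_apply (y : RatFunc Fq) : carlitzE Fq 0 y = y := rfl

theorem carlitzE_succ_apply (d : ℕ) (y : RatFunc Fq) :
    carlitzE Fq (d + 1) y
      = carlitzE Fq d y ^ q - carlitzE Fq d (θ ^ d) ^ (q - 1) * carlitzE Fq d y := rfl

theorem carlitzE_add_algebraMap_mul (d : ℕ) (y z : RatFunc Fq) (x : Fq) :
    carlitzE Fq d (y + algebraMap Fq (RatFunc Fq) x * z)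
      = carlitzE Fq d y + algebraMap Fq (RatFunc Fq) x * carlitzE Fq d z := by
  rw [map_add, ← Algebra.smul_def, map_smul, Algebra.smul_def]

theorem carlitzE_X_pow_add (d j : ℕ) :
    carlitzE Fq d (θ ^ (d + j)) = completeSymm (fun k => θ ^ q ^ k) d j * Del Fq d := by
  induction d generalizing j with
  | zero => simp [carlitzE_zero_apply, completeSymm, Del]
  | succ d ih =>
    have hE : carlitzE Fq d (θ ^ d) = Del Fq d := by
      simpa [completeSymm_zero_right] using ih 0
    have hfrob : completeSymm (fun k => θ ^ q ^ k) d (j + 1) ^ q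
        = completeSymm ((fun k => θ ^ q ^ k) ∘ Nat.succ) d (j + 1) := by
      have := map_completeSymm (FiniteField.frobeniusAlgHom Fq (RatFunc Fq)).toRingHom
        (fun k => θ ^ q ^ k) d (j + 1)
      simp only [AlgHom.toRingHom_eq_coe, RingHom.coe_coe, FiniteField.coe_frobeniusAlgHom] at this
      rw [this]
      congr 1
      ext k
      simp [← pow_mul, pow_succ]
    have hshift := completeSymm_comp_succ_sub (fun k => θ ^ q ^ k) d j
    simp only [pow_zero, pow_one] at hshift
    rw [show d + 1 + j = d + (j + 1) by ring, carlitzE_succ_apply, ih, hE, Del_succ, mul_pow, hfrob]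
    linear_combination Del Fq d ^ q * hshift - completeSymm (fun k => θ ^ q ^ k) d (j + 1) *
      pow_sub_one_mul (Fintype.card_ne_zero (α := Fq)) (Del Fq d)

theorem carlitzE_X_pow (d : ℕ) : carlitzE Fq d (θ ^ d) = Del Fq d := by
  simpa [completeSymm_zero_right] using carlitzE_X_pow_add Fq d 0

theorem sum_inv_add_lowerSum (d : ℕ) (y : RatFunc Fq) (hy : carlitzE Fq d y ≠ 0) :
    ∑ c : Fin d → Fq, (y + lowerSum d c)⁻¹ = Del Fq d / (lel Fq d * carlitzE Fq d y) := by
  induction d generalizing y with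
  | zero => simp [lowerSum, Del, lel, carlitzE_zero_apply]
  | succ d ih =>
    rw [carlitzE_succ_apply, carlitzE_X_pow] at hy
    have hx (x : Fq) : carlitzE Fq d (y + algebraMap Fq (RatFunc Fq) x * θ ^ d) ≠ 0 := by
      rw [carlitzE_add_algebraMap_mul, carlitzE_X_pow]
      exact add_algebraMap_mul_ne_zero hy x
    calc ∑ c : Fin (d + 1) → Fq, (y + lowerSum (d + 1) c)⁻¹
        = ∑ x : Fq, ∑ c : Fin d → Fq,
            (y + algebraMap Fq (RatFunc Fq) x * θ ^ d + lowerSum d c)⁻¹ := by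
          rw [← (Fin.snocEquiv fun _ => Fq).sum_comp, Fintype.sum_prod_type]
          simp [Fin.snocEquiv, lowerSum_snoc, add_right_comm, add_assoc]
      _ = Del Fq d / lel Fq d *
            ∑ x : Fq, (carlitzE Fq d y + algebraMap Fq (RatFunc Fq) x * Del Fq d)⁻¹ := by
          rw [Finset.mul_sum]
          refine Finset.sum_congr rfl fun x _ => ?_
          rw [ih _ (hx x), carlitzE_add_algebraMap_mul, carlitzE_X_pow]
          field_simp
      _ = Del Fq (d + 1) / (lel Fq (d + 1) * carlitzE Fq (d + 1) y) := by
          have hθ := right_ne_zero_of_mul (lel_succ Fq d ▸ lel_ne_zero Fq (d + 1))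
          have := lel_ne_zero Fq d
          rw [sum_inv_add_algebraMap_mul hy, carlitzE_succ_apply, carlitzE_X_pow, Del_succ,
            lel_succ, ← pow_sub_one_mul (Fintype.card_ne_zero (α := Fq)) (Del Fq d)]
          field_simp
          ring

theorem sum_inv_AtoK_monicPoly (d : ℕ) :
    ∑ c : Fin d → Fq, (AtoK Fq (monicPoly Fq d c))⁻¹ = (lel Fq d)⁻¹ := by
  simp_rw [AtoK_monicPoly]
  rw [sum_inv_add_lowerSum Fq d _ (carlitzE_X_pow Fq d ▸ Del_ne_zero Fq d), carlitzE_X_pow,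
    mul_comm, ← div_div, div_self (Del_ne_zero Fq d), one_div]

end Carlitz

section TwistedSum

local notation "q" => Fintype.card Fq
local notation "θ" => (RatFunc.X : RatFunc Fq)

theorem aeval_X_pow_card_pow (a : Polynomial Fq) (m : ℕ) :
    Polynomial.aeval (θ ^ q ^ m) a = AtoK Fq a ^ q ^ m := by
  rw [← frobeniusAlgHom_pow_apply, Polynomial.aeval_algHom_apply,
    RatFunc.aeval_X_left_eq_algebraMap, frobeniusAlgHom_pow_apply]
  rfl

theorem sum_prod_atT_mul_pow_eq_zero (U : Finset ℕ) (hU : U.card + 1 < q) {d k : ℕ}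
    (hk : k < d) :
    ∑ c : Fin d → Fq, (∏ i ∈ U, atT Fq i (monicPoly Fq d c)) *
      MvPolynomial.C (AtoK Fq (monicPoly Fq d c) ^ (q ^ k - 1)) = 0 := by
  -- `a^{q^k - 1}` is the product of the `q - 1` slots `a ↦ a(θ^{q^m})` for each `m < k`.
  let L : ℕ ⊕ ℕ → Polynomial Fq →ₗ[Fq] MvPolynomial ℕ (RatFunc Fq) :=
    Sum.elim (fun i => (Polynomial.aeval (MvPolynomial.X i)).toLinearMap)
      (fun m => (Polynomial.aeval (MvPolynomial.C (θ ^ q ^ m))).toLinearMap)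
  have hslots : ∑ i ∈ U.disjSum (Finset.range k), Sum.elim (fun _ => 1) (fun _ => q - 1) i
      < (q - 1) * Fintype.card (Fin d) := by
    rw [Finset.sum_disjSum]
    simp only [Sum.elim_inl, Sum.elim_inr, Finset.sum_const, smul_eq_mul, mul_one,
      Finset.card_range, Fintype.card_fin]
    have h1 : U.card < q - 1 := by omega
    have h2 : (q - 1) * (k + 1) ≤ (q - 1) * d := Nat.mul_le_mul_left _ hk
    linarith
  rw [← sum_prod_pow_linearMap_eq_zero _ _ L (Polynomial.X ^ d)
    (fun i : Fin d => Polynomial.X ^ (i : ℕ)) hslots]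
  refine Finset.sum_congr rfl fun c _ => ?_
  have ha : Polynomial.X ^ d + ∑ j : Fin d, c j • Polynomial.X ^ (j : ℕ) = monicPoly Fq d c := by
    simp [monicPoly, Polynomial.smul_eq_C_mul]
  rw [ha, Finset.prod_disjSum, ← prod_pow_pow_sub_one _ Fintype.card_ne_zero k, map_prod]
  simp only [L, Sum.elim_inl, Sum.elim_inr, pow_one, AlgHom.toLinearMap_apply, atT]
  congr 1
  refine Finset.prod_congr rfl fun m _ => ?_
  rw [← aeval_X_pow_card_pow, map_pow, ← MvPolynomial.algebraMap_eq,
    Polynomial.aeval_algebraMap_apply]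

theorem SdU_insert {U : Finset ℕ} {i : ℕ} (hi : i ∉ U) (hU : U.card + 1 < q) (d : ℕ) :
    SdU Fq (insert i U) 1 d = SdU Fq U 1 d * bMv Fq d i := by
  set w : (Fin d → Fq) → MvPolynomial ℕ (RatFunc Fq) := fun c =>
    (∏ j ∈ U, atT Fq j (monicPoly Fq d c)) * MvPolynomial.C (AtoK Fq (monicPoly Fq d c))⁻¹
  have hinj : Set.InjOn (fun k => (MvPolynomial.C (θ ^ q ^ k) : MvPolynomial ℕ (RatFunc Fq)))
      (Finset.range d) := fun k _ l _ h =>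
    Nat.pow_right_injective Fintype.one_lt_card
      (RatFunc.X_pow_injective (MvPolynomial.C_injective _ _ h))
  have hw : ∀ k ∈ Finset.range d,
      ∑ c, w c * Polynomial.aeval (MvPolynomial.C (θ ^ q ^ k)) (monicPoly Fq d c) = 0 := by
    intro k hk
    rw [← sum_prod_atT_mul_pow_eq_zero Fq U hU (Finset.mem_range.mp hk)]
    refine Finset.sum_congr rfl fun c _ => ?_
    rw [← MvPolynomial.algebraMap_eq, Polynomial.aeval_algebraMap_apply,
      MvPolynomial.algebraMap_eq, aeval_X_pow_card_pow, mul_assoc, ← map_mul,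
      pow_sub₀ _ (AtoK_monicPoly_ne_zero d c) (Nat.one_le_pow _ _ Fintype.card_pos), pow_one,
      mul_comm (AtoK Fq (monicPoly Fq d c))⁻¹]
  calc SdU Fq (insert i U) 1 d
      = ∑ c, w c * Polynomial.aeval (MvPolynomial.X i) (monicPoly Fq d c) := by
        simp only [SdU, Finset.prod_insert hi, zpow_neg, zpow_one, w, atT]
        exact Finset.sum_congr rfl fun c _ => by ring
    _ = SdU Fq U 1 d * bMv Fq d i := by
        rw [sum_mul_aeval_eq_sum_mul_prod_of_aeval_eq_zero (monicPoly Fq d) w (Finset.range d)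
          hinj (monicPoly_monic d) (by simpa using natDegree_monicPoly d) hw]
        simp only [SdU, bMv, w, zpow_neg, zpow_one]

end TwistedSum

/-- **Simple twisted power sums.**  Let `U` be a finite subset of the variable indices with
`|U| < q`.  Then for every `d ≥ 0`,
`∑_{a ∈ A⁺, deg a = d} (∏_{i∈U} a(t_i))/a = (∏_{i∈U} b_d(t_i))/l_d` in `K[t_i : i ∈ U]`. -/
theorem simple_twisted_power_sum_formula
    (Fq : Type) [Field Fq] [Fintype Fq]
    (U : Finset ℕ) (hU : U.card < Fintype.card Fq) (d : ℕ) :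
    SdU Fq U 1 d = (∏ i ∈ U, bMv Fq d i) * MvPolynomial.C (lel Fq d)⁻¹ := by
  induction U using Finset.induction_on with
  | empty => simp [SdU, ← sum_inv_AtoK_monicPoly Fq d]
  | insert i U hi ih =>
    rw [Finset.card_insert_of_notMem hi] at hU
    rw [SdU_insert Fq hi hU, ih (by omega), Finset.prod_insert hi]
    ring

end PaperMZV
end
end
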